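/- In the commutative polynomial ring ℤ[α][x_{u,v} : 1 ≤ u,v ≤ n], let 1 ≤ k < n and let (c_1,…,c_n) ∈ {1,…,n}^n be a sequence of column indices containing k+1 consecutive entries equal to 1, i.e. c_{m+1} = c_{m+2} = ⋯ = c_{m+k+1} = 1 for some m with 0 ≤ m ≤ n−k−1. Then the polynomial ∑_{w ∈ S_n} α^{n−ν(w)} ∏_{p=1}^{n} x_{w(p), c_p} is divisible by (1+α)(1+2α)⋯(1+kα). In particular, this polynomial vanishes under the specialization α = −1/k. -/

import Mathlib

/-- The number of cycles `ν(w)` of a permutation `w` of `{1,…,n}`: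
the number of orbits of `w` acting on `Fin n` (fixed points count as cycles of length 1). -/
noncomputable def permCycles {n : ℕ} (w : Equiv.Perm (Fin n)) : ℕ :=
  Nat.card (MulAction.orbitRel.Quotient (Subgroup.zpowers w) (Fin n))

/-!
Group `S_n` into left cosets `σ S_B` of the group `S_B` of permutations of the block `B` of
`k + 1` positions where `c` takes the value `0`. The monomial `∏ₚ x_{w(p),c_p}` is constant on
each coset, so it suffices that `∏_{j ≤ k} (1 + jα)` divides `∑_{h ∈ S_B} α^{n - ν(σh)}`.
If `σ` moves a point `x ∉ B`, then `σ' = (x σx) σ` has smaller support and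
`ν(σ'h) = ν(σh) + 1` for every `h ∈ S_B` (the transposition splits `x` off its cycle), so the
sum for `σ` is `α` times the sum for `σ'`. Otherwise `σ ∈ S_B`, and the sum is
`∑_{h ∈ S_{k+1}} α^{k+1-ν(h)} = ∏_{j ≤ k} (1 + jα)`, the generating polynomial of permutations
by their number of cycles.
-/

namespace Equiv.Perm

variable {α β : Type*}

noncomputable def numCycles (σ : Perm α) : ℕ := Nat.card (Quotient (SameCycle.setoid σ))

theorem numCycles_eq_card_orbitRel_quotient (σ : Perm α) :
    numCycles σ = Nat.card (MulAction.orbitRel.Quotient (Subgroup.zpowers σ) α) := by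
  have : SameCycle.setoid σ = MulAction.orbitRel (Subgroup.zpowers σ) α := by
    ext a b
    rw [MulAction.orbitRel_apply, MulAction.mem_orbit_iff]
    constructor
    · rintro ⟨i, rfl⟩
      exact ⟨⟨σ ^ (-i), -i, rfl⟩, by simp [Subgroup.smul_def, Perm.smul_def]⟩
    · rintro ⟨⟨_, i, rfl⟩, rfl⟩
      exact ⟨-i, by simp [Subgroup.smul_def, Perm.smul_def]⟩
  rw [numCycles, this]

theorem numCycles_le_card [Fintype α] (σ : Perm α) : numCycles σ ≤ Fintype.card α :=
  Nat.card_eq_fintype_card (α := α) ▸ Nat.card_le_card_of_surjective _ Quot.mk_surjective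

theorem numCycles_eq_of_sameCycle_iff {σ : Perm α} {τ : Perm β} (i : β → α)
    (hi : ∀ y z, τ.SameCycle y z ↔ σ.SameCycle (i y) (i z))
    (hsurj : ∀ a, ∃ y, σ.SameCycle (i y) a) : numCycles τ = numCycles σ := by
  refine Nat.card_congr (Equiv.ofBijective
    (Quotient.map (sa := SameCycle.setoid τ) (sb := SameCycle.setoid σ) i
      fun y z => (hi y z).1) ⟨?_, ?_⟩)
  · rintro ⟨y⟩ ⟨z⟩ h
    exact Quotient.sound ((hi y z).2 (Quotient.exact h))
  · rintro ⟨a⟩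
    obtain ⟨y, hy⟩ := hsurj a
    exact ⟨⟦y⟧, Quotient.sound hy⟩

theorem numCycles_ofSubtype [Fintype α] {p : α → Prop} [DecidablePred p] (g : Perm (Subtype p)) :
    numCycles (ofSubtype g) = numCycles g + Fintype.card {a // ¬p a} := by
  have hsame : ∀ y z : Subtype p, (ofSubtype g).SameCycle y z ↔ g.SameCycle y z :=
    fun y z => sameCycle_extendDomain (f := Equiv.refl _)
  have hfixed : ∀ a : {a // ¬p a}, ∀ b, (ofSubtype g).SameCycle a b → (a : α) = b :=
    fun a _ h => h.eq_of_left (ofSubtype_apply_of_not_mem g a.2)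
  rw [numCycles, numCycles, ← Nat.card_eq_fintype_card, ← Nat.card_sum]
  refine (Nat.card_congr (Equiv.ofBijective
    (Sum.elim (Quotient.map (sa := SameCycle.setoid g) (sb := SameCycle.setoid (ofSubtype g))
      Subtype.val fun y z => (hsame y z).2)
      fun a => Quotient.mk (SameCycle.setoid (ofSubtype g)) a.1) ⟨?_, ?_⟩)).symm
  · rintro (y | a) (z | b) h
    all_goals
      try obtain ⟨y, rfl⟩ := Quotient.mk_surjective y
      try obtain ⟨z, rfl⟩ := Quotient.mk_surjective z
      simp only [Sum.elim_inl, Sum.elim_inr, Quotient.map_mk, Quotient.eq] at h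
    · exact congrArg Sum.inl (Quotient.sound ((hsame y z).1 h))
    · exact absurd (hfixed b y h.symm ▸ y.2) b.2
    · exact absurd (hfixed a z h ▸ z.2) a.2
    · exact congrArg Sum.inr (Subtype.ext (hfixed a b h))
  · rintro ⟨a⟩
    by_cases ha : p a
    · exact ⟨Sum.inl ⟦⟨a, ha⟩⟧, rfl⟩
    · exact ⟨Sum.inr ⟨a, ha⟩, rfl⟩

theorem prod_mul_ofSubtype_apply {M γ : Type*} [CommMonoid M] [Fintype α] {p : α → Prop}
    [DecidablePred p] {c : α → γ} (hc : ∀ x y, p x → p y → c x = c y) (f : α × γ → M)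
    (g : Perm α) (h : Perm (Subtype p)) :
    ∏ q, f ((g * ofSubtype h) q, c q) = ∏ q, f (g q, c q) := by
  refine Fintype.prod_equiv (ofSubtype h) _ _ fun q => ?_
  rw [mul_apply]
  by_cases hq : p q
  · rw [hc _ _ ((ofSubtype_apply_mem_iff_mem h q).2 hq) hq]
  · rw [ofSubtype_apply_of_not_mem h hq]

theorem SameCycle.of_forall_sameCycle_apply [Finite α] {σ τ : Perm α}
    (h : ∀ u, σ.SameCycle u (τ u)) {y z : α} (hyz : τ.SameCycle y z) : σ.SameCycle y z := by
  obtain ⟨i, -, rfl⟩ := hyz.exists_pow_eq'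
  clear hyz
  induction i with
  | zero => exact SameCycle.refl σ y
  | succ i ih => exact ih.trans (by rw [pow_succ', mul_apply]; exact h _)

theorem numCycles_swap_mul [Fintype α] [DecidableEq α] {σ : Perm α} {x : α} (hx : σ x ≠ x) :
    numCycles (swap x (σ x) * σ) = numCycles σ + 1 := by
  set τ := swap x (σ x) * σ
  have hτx : τ x = x := by simp [τ]
  have hτ_of_ne : ∀ y, σ y ≠ x → y ≠ x → τ y = σ y := fun y h hy =>
    swap_apply_of_ne_of_ne h (σ.injective.ne hy)
  have hτ_of_eq : ∀ y, σ y = x → τ y = σ x := fun y h => by simp [τ, h]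
  have hτσ : ∀ y z, τ.SameCycle y z → σ.SameCycle y z := by
    refine fun y z => SameCycle.of_forall_sameCycle_apply fun u => ?_
    by_cases hu : σ u = x
    · rw [hτ_of_eq u hu, ← hu]; exact ⟨2, by rw [zpow_two, mul_apply]⟩
    by_cases hux : u = x
    · rw [hux, hτx]
    · rw [hτ_of_ne u hu hux]; exact ⟨1, by simp⟩
  -- before reaching `x`, the `σ`-orbit of `y ≠ x` is followed by `τ`, which jumps over `x`
  have hστ : ∀ y, y ≠ x → ∀ i : ℕ, (σ ^ i) y ≠ x → τ.SameCycle y ((σ ^ i) y) := by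
    intro y hy i
    induction i using Nat.strong_induction_on with
    | _ i ih =>
      match i with
      | 0 => exact fun _ => SameCycle.refl τ y
      | j + 1 =>
        intro hj
        rw [pow_succ', mul_apply] at hj ⊢
        by_cases hjx : (σ ^ j) y = x
        · obtain _ | l := j
          · exact absurd hjx hy
          rw [pow_succ', mul_apply] at hjx
          have hl : (σ ^ l) y ≠ x := fun h => hx (h ▸ hjx)
          refine (ih l (by omega) hl).trans ⟨1, ?_⟩
          rw [zpow_one, hτ_of_eq _ hjx, pow_succ', mul_apply, hjx]
        · exact (ih j (by omega) hjx).trans ⟨1, by rw [zpow_one, hτ_of_ne _ hj hjx]⟩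
  have hτ_mem : ∀ y, τ y ≠ x ↔ y ≠ x := fun y => τ.injective.ne_iff' hτx
  rw [← ofSubtype_subtypePerm (p := (· ≠ x)) hτ_mem (fun y hy hyx => hy (hyx ▸ hτx)),
    numCycles_ofSubtype]
  have hcard_fixed : Fintype.card {a // ¬a ≠ x} = 1 := by simp
  rw [hcard_fixed]
  congr 1
  refine numCycles_eq_of_sameCycle_iff Subtype.val (fun y z => ?_) (fun a => ?_)
  · rw [sameCycle_subtypePerm]
    refine ⟨hτσ y z, fun h => ?_⟩
    obtain ⟨i, -, hi⟩ := h.exists_pow_eq'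
    exact hi ▸ hστ y y.2 i (hi ▸ z.2)
  · by_cases ha : a = x
    · exact ⟨⟨σ x, hx⟩, ha ▸ ⟨-1, by simp⟩⟩
    · exact ⟨⟨a, ha⟩, SameCycle.refl σ a⟩

theorem bijective_swap_mul_ofSubtype [DecidableEq α] (b : α) :
    Function.Bijective fun x : Perm {y // y ≠ b} × α => swap b x.2 * ofSubtype x.1 := by
  have happly : ∀ (g : Perm {y // y ≠ b}) y, (swap b y * ofSubtype g) b = y := fun g y => by
    rw [mul_apply, ofSubtype_apply_of_not_mem g (not_not.2 rfl), swap_apply_left]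
  refine ⟨fun ⟨g, y⟩ ⟨g', y'⟩ h => ?_, fun h => ?_⟩
  · dsimp only at h
    obtain rfl : y = y' := (happly g y).symm.trans (h ▸ happly g' y')
    exact Prod.ext (ofSubtype_injective (mul_left_cancel h)) rfl
  · have hmem : ∀ y, (swap b (h b) * h) y ≠ b ↔ y ≠ b := fun y =>
      (swap b (h b) * h).injective.ne_iff' (by simp)
    refine ⟨⟨(swap b (h b) * h).subtypePerm hmem, h b⟩, ?_⟩
    dsimp only
    rw [ofSubtype_subtypePerm (p := (· ≠ b)) hmem fun y hy hyb => hy (by simp [hyb]),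
      swap_mul_self_mul]

theorem sum_pow_card_sub_numCycles {R : Type*} [CommSemiring R] (a : R) (α : Type*) [Fintype α]
    [DecidableEq α] :
    ∑ h : Perm α, a ^ (Fintype.card α - numCycles h) =
      ∏ j ∈ Finset.range (Fintype.card α), (1 + j * a) := by
  induction hn : Fintype.card α generalizing α with
  | zero => simp [Fintype.card_perm, hn]
  | succ n ih =>
    obtain ⟨b⟩ : Nonempty α := Fintype.card_pos_iff.1 (by omega)
    have hcard : Fintype.card {y // y ≠ b} = n := by
      rw [Fintype.card_subtype_compl, hn, Fintype.card_unique]; rfl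
    have hfix : ∀ g : Perm {y // y ≠ b}, numCycles (ofSubtype g) = numCycles g + 1 := fun g => by
      rw [numCycles_ofSubtype]; simp
    have hle : ∀ g : Perm {y // y ≠ b}, numCycles g ≤ n := fun g =>
      hcard ▸ numCycles_le_card g
    have hmove : ∀ (g : Perm {y // y ≠ b}) y, y ≠ b →
        numCycles (swap b y * ofSubtype g) = numCycles g := fun g y hy => by
      have := numCycles_swap_mul (σ := swap b y * ofSubtype g) (x := b)
        (by rwa [mul_apply, ofSubtype_apply_of_not_mem g (not_not.2 rfl), swap_apply_left])
      rw [mul_apply, ofSubtype_apply_of_not_mem g (not_not.2 rfl), swap_apply_left,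
        swap_mul_self_mul, hfix] at this
      omega
    rw [← Fintype.sum_bijective _ (bijective_swap_mul_ofSubtype b) _ _ fun _ => rfl,
      Fintype.sum_prod_type, Finset.prod_range_succ, ← ih _ hcard, Finset.sum_mul]
    refine Finset.sum_congr rfl fun g _ => ?_
    have hrest : ∀ y ∈ ({b}ᶜ : Finset α),
        a ^ (n + 1 - numCycles (swap b y * ofSubtype g)) = a ^ (n - numCycles g) * a :=
      fun y hy => by
        rw [hmove g y (by simpa using hy), Nat.sub_add_comm (hle g), pow_succ]
    rw [Fintype.sum_eq_add_sum_compl b, Finset.sum_congr rfl hrest, Finset.sum_const,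
      Finset.card_compl, Finset.card_singleton, hn, swap_self, ← one_def, one_mul, hfix,
      Nat.add_sub_add_right, nsmul_eq_mul]
    push_cast
    ring

theorem prod_range_dvd_sum_pow_card_sub_numCycles_mul_ofSubtype {R : Type*} [CommSemiring R]
    (a : R) [Fintype α] [DecidableEq α] (p : α → Prop) [DecidablePred p] (σ : Perm α) :
    ∏ j ∈ Finset.range (Fintype.card (Subtype p)), (1 + j * a) ∣
      ∑ h : Perm (Subtype p), a ^ (Fintype.card α - numCycles (σ * ofSubtype h)) := by
  induction hs : σ.support.card using Nat.strong_induction_on generalizing σ with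
  | _ s ih =>
  by_cases hfix : ∀ x, ¬p x → σ x = x
  · obtain ⟨σ₀, rfl⟩ : ∃ σ₀, ofSubtype σ₀ = σ :=
      ⟨_, congrArg Subtype.val ((Perm.subtypeEquivSubtypePerm p).apply_symm_apply ⟨σ, hfix⟩)⟩
    refine (calc
      _ = ∑ h : Perm (Subtype p), a ^ (Fintype.card α - numCycles (ofSubtype h)) :=
          Fintype.sum_equiv (Equiv.mulLeft σ₀) _ _ fun h => by rw [coe_mulLeft, map_mul]
      _ = ∑ h : Perm (Subtype p), a ^ (Fintype.card (Subtype p) - numCycles h) :=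
          Finset.sum_congr rfl fun h _ => by
            have hle := numCycles_le_card h
            have hp : Fintype.card (Subtype p) ≤ Fintype.card α := Fintype.card_subtype_le p
            have hnp : Fintype.card {a // ¬p a} = Fintype.card α - Fintype.card (Subtype p) :=
              Fintype.card_subtype_compl p
            rw [numCycles_ofSubtype, hnp]
            congr 1
            omega
      _ = _ := sum_pow_card_sub_numCycles a (Subtype p)).symm.dvd
  · push Not at hfix
    obtain ⟨x, hpx, hσx⟩ := hfix
    have hcycles : ∀ h : Perm (Subtype p),
        numCycles (swap x (σ x) * σ * ofSubtype h) = numCycles (σ * ofSubtype h) + 1 := fun h => by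
      have hx : (σ * ofSubtype h) x = σ x := by rw [mul_apply, ofSubtype_apply_of_not_mem h hpx]
      rw [mul_assoc, ← hx, numCycles_swap_mul (hx ▸ hσx)]
    have hsum : ∑ h : Perm (Subtype p), a ^ (Fintype.card α - numCycles (σ * ofSubtype h)) =
        (∑ h : Perm (Subtype p),
          a ^ (Fintype.card α - numCycles (swap x (σ x) * σ * ofSubtype h))) * a := by
      rw [Finset.sum_mul]
      refine Finset.sum_congr rfl fun h _ => ?_
      have hle := numCycles_le_card (swap x (σ x) * σ * ofSubtype h)
      rw [hcycles] at hle
      rw [← pow_succ, hcycles]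
      congr 1
      omega
    rw [hsum]
    exact dvd_mul_of_dvd_left (ih _ (hs ▸ card_support_swap_mul hσx) _ rfl) a

end Equiv.Perm

theorem dvd_sum_of_forall_dvd_sum_coset {G K R : Type*} [Group G] [Fintype G] [Group K]
    [Fintype K] [Semiring R] {φ : K →* G} (hφ : Function.Injective φ) {F : G → R} {d : R}
    (h : ∀ g, d ∣ ∑ k, F (g * φ k)) : d ∣ ∑ g, F g := by
  classical
  have hbij : Function.Bijective fun x : (G ⧸ φ.range) × K => x.1.out * φ x.2 := by
    refine ⟨fun ⟨q, k⟩ ⟨q', k'⟩ hqk => ?_, fun g => ?_⟩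
    · dsimp only at hqk
      have hq : q = q' := by
        rw [← QuotientGroup.out_eq' q, ← QuotientGroup.out_eq' q',
          ← QuotientGroup.mk_mul_of_mem q.out (MonoidHom.mem_range.2 ⟨k, rfl⟩), hqk,
          QuotientGroup.mk_mul_of_mem _ (MonoidHom.mem_range.2 ⟨k', rfl⟩)]
      subst hq
      exact Prod.ext rfl (hφ (mul_left_cancel hqk))
    · obtain ⟨⟨_, k, rfl⟩, hk⟩ := QuotientGroup.mk_out_eq_mul φ.range g
      exact ⟨(g, k⁻¹), by simp [hk]⟩
  rw [← Fintype.sum_bijective _ hbij _ _ fun _ => rfl, Fintype.sum_prod_type]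
  exact Finset.dvd_sum fun q _ => h q.out

theorem permCycles_eq_numCycles {n : ℕ} (w : Equiv.Perm (Fin n)) :
    permCycles w = w.numCycles :=
  (Equiv.Perm.numCycles_eq_card_orbitRel_quotient w).symm

theorem Fin.card_subtype_le_and_le {n : ℕ} (m k : ℕ) (hm : m + k + 1 ≤ n) :
    Fintype.card {i : Fin n // m ≤ i.val ∧ i.val ≤ m + k} = k + 1 := by
  rw [Fintype.card_subtype, ← Finset.card_map Fin.valEmbedding]
  convert Nat.card_Icc m (m + k) using 2
  · ext x
    simp only [Finset.mem_map, Finset.mem_filter, Finset.mem_univ, true_and,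
      Fin.valEmbedding_apply, Finset.mem_Icc]
    exact ⟨fun ⟨i, hi, hx⟩ => hx ▸ hi, fun hx => ⟨⟨x, by omega⟩, hx, rfl⟩⟩
  · omega

open Equiv Perm

/-- In `ℤ[α][x_{u,v}]`, if `1 ≤ k < n` and the column-index sequence `c` has `k+1`
consecutive entries equal to `1` (0-indexed: `c_{m} = ⋯ = c_{m+k} = 0`), then
`∑_{w ∈ S_n} α^{n−ν(w)} ∏_{p=1}^n x_{w(p),c_p}` is divisible by `(1+α)(1+2α)⋯(1+kα)`. -/
theorem stmt7 (n k m : ℕ)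
    (c : Fin n → Fin n) (hm : m + k + 1 ≤ n)
    (hc : ∀ t : ℕ, ∀ ht : t ≤ k, c ⟨m + t, by omega⟩ = ⟨0, by omega⟩) :
    (MvPolynomial.C (∏ j ∈ Finset.Icc 1 k, (1 + (j : Polynomial ℤ) * Polynomial.X)) :
        MvPolynomial (Fin n × Fin n) (Polynomial ℤ)) ∣
    ∑ w : Equiv.Perm (Fin n),
      MvPolynomial.C ((Polynomial.X : Polynomial ℤ) ^ (n - permCycles w)) *
        ∏ p : Fin n, MvPolynomial.X (w p, c p) := by
  let p : Fin n → Prop := fun i => m ≤ i.val ∧ i.val ≤ m + k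
  have hc_block : ∀ i, p i → c i = ⟨0, by omega⟩ := fun i ⟨hmi, hik⟩ =>
    (congrArg c (Fin.ext (by simp only; omega))).trans (hc (i - m) (by omega))
  refine dvd_sum_of_forall_dvd_sum_coset (ofSubtype_injective (p := p)) fun g => ?_
  rw [Finset.sum_congr rfl fun h _ => by
      rw [prod_mul_ofSubtype_apply (fun x y hx hy => (hc_block x hx).trans (hc_block y hy).symm),
        permCycles_eq_numCycles],
    ← Finset.sum_mul, ← map_sum]
  refine Dvd.dvd.mul_right (map_dvd MvPolynomial.C ?_) _
  have hdvd := prod_range_dvd_sum_pow_card_sub_numCycles_mul_ofSubtype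
    (Polynomial.X : Polynomial ℤ) p g
  rw [Fintype.card_fin, Fin.card_subtype_le_and_le m k hm] at hdvd
  refine dvd_trans (Finset.prod_dvd_prod_of_subset _ _ _ fun j hj => ?_) hdvd
  simp only [Finset.mem_Icc, Finset.mem_range] at hj ⊢
  omega
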